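/- arXiv:2311.05750 — 3 statements merged into one kernel-verified Lean document; each statement's English description precedes it below -/
import Mathlib

section
/- Let λ not be an eigenvalue of A, B̂_1,...,B̂_{n-1} an orthonormal complement of B̂ = B/‖B‖, and α_1,...,α_{n-1} ∈ ℝ arbitrary. Then the gain K = (B̂/‖B‖ + Σ_i α_i B̂_i)^T (A - λ I) satisfies det(λ I - A + B K) = 0, so the set of such gains is an (n-1)-dimensional affine family all assigning the eigenvalue λ. -/
/-!
The coefficient vector `v = B̂/‖B‖ + Σᵢ αᵢ B̂ᵢ` satisfies `vᵀ B = 1`, and `K = vᵀ (A - λ I)` factors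
`λ I - A + B K = (B vᵀ - I)(A - λ I)`. By the matrix determinant lemma
`det (I - B vᵀ) = 1 - vᵀ B = 0`.
-/

open Matrix

namespace Matrix

variable {n R : Type*} [Fintype n] [CommRing R]

theorem sum_smul_dotProduct_eq_zero {ι : Type*} (s : Finset ι) (α : ι → R) {w : ι → n → R}
    {u : n → R} (hw : ∀ i, w i ⬝ᵥ u = 0) : (∑ i ∈ s, α i • w i) ⬝ᵥ u = 0 := by
  simp [sum_dotProduct, smul_dotProduct, hw]

variable [DecidableEq n]

theorem det_one_sub_vecMulVec (u v : n → R) : det (1 - vecMulVec u v) = 1 - v ⬝ᵥ u := by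
  rw [sub_eq_add_neg, ← neg_vecMulVec, vecMulVec_eq Unit,
    det_one_add_replicateCol_mul_replicateRow, dotProduct_neg, ← sub_eq_add_neg]

theorem det_vecMulVec_vecMul_sub_eq_zero (M : Matrix n n R) {u v : n → R} (h : v ⬝ᵥ u = 1) :
    det (vecMulVec u (v ᵥ* M) - M) = 0 := by
  rw [← vecMulVec_mul, ← sub_one_mul, det_mul, ← neg_sub, det_neg, det_one_sub_vecMulVec, h,
    sub_self, mul_zero, zero_mul]

end Matrix

theorem inv_sqrt_smul_inv_sqrt_smul_dotProduct_self {n : Type*} [Fintype n] {B : n → ℝ}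
    (hB : B ≠ 0) : ((Real.sqrt (B ⬝ᵥ B))⁻¹ • (Real.sqrt (B ⬝ᵥ B))⁻¹ • B) ⬝ᵥ B = 1 := by
  have hpos : 0 < B ⬝ᵥ B := by
    simpa using dotProduct_self_star_pos_iff.mpr hB
  rw [smul_smul, smul_dotProduct, smul_eq_mul, ← mul_inv, Real.mul_self_sqrt hpos.le,
    inv_mul_cancel₀ hpos.ne']

theorem stmt_12_general (m : ℕ) (A : Matrix (Fin (m + 1)) (Fin (m + 1)) ℝ)
    (B : Fin (m + 1) → ℝ)
    (hB : B ≠ 0)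
    (l : ℝ)
    (Bh : Fin (m + 1) → ℝ)
    (hBh : Bh = (Real.sqrt (B ⬝ᵥ B))⁻¹ • B)
    (Bi : Fin m → Fin (m + 1) → ℝ)
    (horth : ∀ i, Bi i ⬝ᵥ B = 0)
    (α : Fin m → ℝ)
    (K : Fin (m + 1) → ℝ)
    (hK : K = ((Real.sqrt (B ⬝ᵥ B))⁻¹ • Bh + ∑ i : Fin m, α i • Bi i)
        ᵥ* (A - l • (1 : Matrix (Fin (m + 1)) (Fin (m + 1)) ℝ))) :
    (l • (1 : Matrix (Fin (m + 1)) (Fin (m + 1)) ℝ) - A + Matrix.vecMulVec B K).det = 0 := by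
  have hvB : ((Real.sqrt (B ⬝ᵥ B))⁻¹ • Bh + ∑ i : Fin m, α i • Bi i) ⬝ᵥ B = 1 := by
    rw [add_dotProduct, hBh, inv_sqrt_smul_inv_sqrt_smul_dotProduct_self hB,
      sum_smul_dotProduct_eq_zero _ _ horth, add_zero]
  rw [show l • 1 - A + vecMulVec B K = vecMulVec B K - (A - l • 1) by abel, hK]
  exact det_vecMulVec_vecMul_sub_eq_zero _ hvB

/-- With `{B̂, B̂₁, …, B̂_{n-1}}` an orthonormal basis extending `B̂ = B/‖B‖`
(so `I = B̂B̂ᵀ + Σᵢ B̂ᵢB̂ᵢᵀ`, `B̂ᵢᵀ B = 0`) and `λ` not an eigenvalue of `A`,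
every gain `K = (B̂/‖B‖ + Σᵢ αᵢ B̂ᵢ)ᵀ (A - λ I)` satisfies
`det(λ I - A + B K) = 0`. Here `n = m + 1`. -/
theorem stmt_12 (m : ℕ) (A : Matrix (Fin (m + 1)) (Fin (m + 1)) ℝ)
    (B : Fin (m + 1) → ℝ)
    (hB : B ≠ 0)
    (l : ℝ)
    (hl : (A - l • (1 : Matrix (Fin (m + 1)) (Fin (m + 1)) ℝ)).det ≠ 0)
    (Bh : Fin (m + 1) → ℝ)
    (hBh : Bh = (Real.sqrt (B ⬝ᵥ B))⁻¹ • B)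
    (Bi : Fin m → Fin (m + 1) → ℝ)
    (horth : ∀ i, Bi i ⬝ᵥ B = 0)
    (hcomp : (1 : Matrix (Fin (m + 1)) (Fin (m + 1)) ℝ)
        = Matrix.vecMulVec Bh Bh + ∑ i : Fin m, Matrix.vecMulVec (Bi i) (Bi i))
    (α : Fin m → ℝ)
    (K : Fin (m + 1) → ℝ)
    (hK : K = ((Real.sqrt (B ⬝ᵥ B))⁻¹ • Bh + ∑ i : Fin m, α i • Bi i)
        ᵥ* (A - l • (1 : Matrix (Fin (m + 1)) (Fin (m + 1)) ℝ))) :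
    (l • (1 : Matrix (Fin (m + 1)) (Fin (m + 1)) ℝ) - A + Matrix.vecMulVec B K).det = 0 :=
  stmt_12_general m A B hB l Bh hBh Bi horth α K hK
end

section
/- Chain controllability lemma: suppose (A_0, B_0) of dimension n is controllable (the vectors B_0, A_0 B_0, ..., A_0^{n-1} B_0 span ℝ^n). For each k, let an_{k+1} be a full-row-rank (n-k-1)×(n-k) matrix with an_{k+1} B_k = 0, and define B_{k+1} = an_{k+1} A_k B_k and A_{k+1} so that an_{k+1} A_k = A_{k+1} an_{k+1} on span{B_k, A_k B_k, ...}. Then for every k = 1,...,n-1, dim span{B_k, A_k B_k, ..., A_k^{n-k-1} B_k} = n - k. -/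
/-!
Each reduction step `an_k` is surjective (full row rank) and, by the commutation relation, maps
the Krylov space `span {A_k ^ j B_k | j < d}` onto `span {A_{k+1} ^ j B_{k+1} | j < d - 1}`: the
`j = 0` generator is killed since `an_k B_k = 0`, and the `j + 1`-st one goes to the `j`-th one.
Hence controllability, i.e. `span {A_k ^ j B_k | j < n - k} = ⊤`, passes from level `k` to
level `k + 1`, and the dimension of the whole space `ℝ^(n - k)` is `n - k`.
-/

open Matrix

namespace Matrix

theorem range_mulVecLin_eq_top_of_rank_eq {K m n : Type*} [Field K] [Fintype m]
    [Fintype n] (M : Matrix m n K) (h : M.rank = Fintype.card m) :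
    LinearMap.range M.mulVecLin = ⊤ :=
  Submodule.eq_top_of_finrank_eq (by rw [← rank, h, Module.finrank_fintype_fun_eq_card])

variable {R ι κ : Type*} [CommRing R] [Fintype ι] [DecidableEq ι] [Fintype κ] [DecidableEq κ]

def krylovSpan (A : Matrix ι ι R) (b : ι → R) (d : ℕ) : Submodule R (ι → R) :=
  Submodule.span R (Set.range fun j : Fin d => (A ^ (j : ℕ)) *ᵥ b)

theorem map_krylovSpan {P : Matrix κ ι R} {A : Matrix ι ι R} {A' : Matrix κ κ R}
    {b : ι → R} {b' : κ → R} (hb : P *ᵥ b = 0)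
    (hcomm : ∀ j : ℕ, P *ᵥ ((A ^ (j + 1)) *ᵥ b) = (A' ^ j) *ᵥ b') :
    ∀ d : ℕ, (krylovSpan A b d).map P.mulVecLin = krylovSpan A' b' (d - 1)
  | 0 => by simp [krylovSpan]
  | d + 1 => by
    have htail : Fin.tail (P.mulVecLin ∘ fun j : Fin (d + 1) => (A ^ (j : ℕ)) *ᵥ b) =
        fun j : Fin d => (A' ^ (j : ℕ)) *ᵥ b' := funext fun j => hcomm j
    rw [krylovSpan, Submodule.map_span, ← Set.range_comp, Fin.range_fin_succ, htail]
    simp [hb, krylovSpan]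

end Matrix

theorem stmt_14_general (n : ℕ)
    (A : ∀ k : ℕ, Matrix (Fin (n - k)) (Fin (n - k)) ℝ)
    (B : ∀ k : ℕ, Fin (n - k) → ℝ)
    (an : ∀ k : ℕ, Matrix (Fin (n - (k + 1))) (Fin (n - k)) ℝ)
    (hctrl : Submodule.span ℝ
        (Set.range fun j : Fin n => (A 0 ^ (j : ℕ)) *ᵥ B 0) = ⊤)
    (hrank : ∀ k : ℕ, (an k).rank = n - (k + 1))
    (hann : ∀ k : ℕ, an k *ᵥ B k = 0)
    (hcomm : ∀ k j : ℕ,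
        an k *ᵥ ((A k ^ (j + 1)) *ᵥ B k) = (A (k + 1) ^ j) *ᵥ B (k + 1)) :
    ∀ k : ℕ, 1 ≤ k → k ≤ n - 1 →
      Module.finrank ℝ
        (Submodule.span ℝ (Set.range fun j : Fin (n - k) => (A k ^ (j : ℕ)) *ᵥ B k))
        = n - k := by
  have hcontrol : ∀ k, krylovSpan (A k) (B k) (n - k) = ⊤ := by
    intro k
    induction k with
    | zero => exact hctrl
    | succ k ih =>
      have hsurj := (an k).range_mulVecLin_eq_top_of_rank_eq (by simpa using hrank k)
      rw [← hsurj, ← Submodule.map_top, ← ih, map_krylovSpan (hann k) (hcomm k)]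
      rfl -- `n - k - 1` and `n - (k + 1)` agree definitionally
  intro k _ _
  rw [← krylovSpan, hcontrol k, finrank_top, Module.finrank_fin_fun]

/-- Chain controllability lemma: if `(A₀, B₀)` of dimension `n` is controllable
and the quotient chain satisfies `an_{k+1} B_k = 0` with `an_{k+1}` of full row
rank `n-k-1`, `B_{k+1} = an_{k+1} A_k B_k`, and the commutation
`an_{k+1} A_k^{j+1} B_k = A_{k+1}^j B_{k+1}`, then for every `k = 1, …, n-1`,
`dim span{B_k, A_k B_k, …, A_k^{n-k-1} B_k} = n - k`. -/
theorem stmt_14 (n : ℕ)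
    (A : ∀ k : ℕ, Matrix (Fin (n - k)) (Fin (n - k)) ℝ)
    (B : ∀ k : ℕ, Fin (n - k) → ℝ)
    (an : ∀ k : ℕ, Matrix (Fin (n - (k + 1))) (Fin (n - k)) ℝ)
    (hctrl : Submodule.span ℝ
        (Set.range fun j : Fin n => (A 0 ^ (j : ℕ)) *ᵥ B 0) = ⊤)
    (hrank : ∀ k : ℕ, (an k).rank = n - (k + 1))
    (hann : ∀ k : ℕ, an k *ᵥ B k = 0)
    (hBsucc : ∀ k : ℕ, B (k + 1) = an k *ᵥ (A k *ᵥ B k))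
    (hcomm : ∀ k j : ℕ,
        an k *ᵥ ((A k ^ (j + 1)) *ᵥ B k) = (A (k + 1) ^ j) *ᵥ B (k + 1)) :
    ∀ k : ℕ, 1 ≤ k → k ≤ n - 1 →
      Module.finrank ℝ
        (Submodule.span ℝ (Set.range fun j : Fin (n - k) => (A k ^ (j : ℕ)) *ᵥ B k))
        = n - k :=
  stmt_14_general n A B an hctrl hrank hann hcomm
end

section
/- Contrapositive controllability test: in the quotient chain above, if B_k = 0 for some k ≥ 1, then rank[B_0, A_0 B_0, ..., A_0^{n-1} B_0] < n, i.e. (A_0, B_0) is not controllable. -/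
/-!
Let `K_m = span {A_m^j B_m : j ∈ ℕ}` be the Krylov space of the `m`-th pair of the chain.
The commutation relation and `an_m B_m = 0` show that `an_m` maps `K_m` into `K_{m+1}`, and
`an_m` has a kernel of dimension at most one, so `dim K_{m+1} ≥ dim K_m - 1`. If `(A_0, B_0)`
is controllable then `dim K_0 = n`, hence `dim K_m ≥ n - m > 0` for every `m < n`, which
forces `B_m ≠ 0`.
-/

open Matrix Module

theorem Submodule.finrank_le_finrank_map_add_finrank_ker {K V W : Type*} [DivisionRing K]
    [AddCommGroup V] [Module K V] [AddCommGroup W] [Module K W] [FiniteDimensional K V]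
    (f : V →ₗ[K] W) (S : Submodule K V) :
    finrank K S ≤ finrank K (S.map f) + finrank K (LinearMap.ker f) := by
  have h := (f.domRestrict S).finrank_range_add_finrank_ker
  rw [LinearMap.range_domRestrict] at h
  have hker : finrank K (LinearMap.ker (f.domRestrict S)) ≤ finrank K (LinearMap.ker f) := by
    rw [LinearMap.ker_domRestrict, ← Submodule.finrank_map_subtype_eq]
    exact Submodule.finrank_mono (Submodule.map_comap_le _ _)
  omega

theorem Matrix.rank_add_finrank_ker_mulVecLin {K m n : Type*} [Field K] [Fintype m] [Fintype n]
    (P : Matrix m n K) : P.rank + finrank K (LinearMap.ker P.mulVecLin) = Fintype.card n := by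
  rw [Matrix.rank, LinearMap.finrank_range_add_finrank_ker, finrank_fintype_fun_eq_card]

def Matrix.krylov {K n : Type*} [CommRing K] [Fintype n] [DecidableEq n] (A : Matrix n n K)
    (v : n → K) : Submodule K (n → K) :=
  Submodule.span K (Set.range fun j : ℕ => (A ^ j) *ᵥ v)

namespace Matrix

variable {K m n : Type*} [Field K] [Fintype m] [Fintype n] [DecidableEq m] [DecidableEq n]

theorem krylov_zero (A : Matrix n n K) : A.krylov 0 = ⊥ := by
  simp [krylov]

theorem map_mulVecLin_krylov_le {P : Matrix m n K} {A : Matrix n n K} {A' : Matrix m m K}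
    {v : n → K} {v' : m → K} (hv : P *ᵥ v = 0)
    (hcomm : ∀ j : ℕ, P *ᵥ ((A ^ (j + 1)) *ᵥ v) = (A' ^ j) *ᵥ v') :
    (A.krylov v).map P.mulVecLin ≤ A'.krylov v' := by
  rw [krylov, Submodule.map_span, Submodule.span_le]
  rintro _ ⟨_, ⟨j, rfl⟩, rfl⟩
  cases j with
  | zero => simp [hv]
  | succ j => exact Submodule.subset_span ⟨j, (hcomm j).symm⟩

theorem finrank_krylov_le {P : Matrix m n K} {A : Matrix n n K} {A' : Matrix m m K}
    {v : n → K} {v' : m → K} (hv : P *ᵥ v = 0)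
    (hcomm : ∀ j : ℕ, P *ᵥ ((A ^ (j + 1)) *ᵥ v) = (A' ^ j) *ᵥ v') :
    finrank K (A.krylov v) + P.rank ≤ finrank K (A'.krylov v') + Fintype.card n := by
  have hmap := Submodule.finrank_mono (map_mulVecLin_krylov_le hv hcomm)
  have hker := (A.krylov v).finrank_le_finrank_map_add_finrank_ker P.mulVecLin
  have hnullity := P.rank_add_finrank_ker_mulVecLin
  omega

theorem krylov_eq_top_of_span_eq_top {k : ℕ} {A : Matrix n n K} {v : n → K}
    (h : Submodule.span K (Set.range fun j : Fin k => (A ^ (j : ℕ)) *ᵥ v) = ⊤) :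
    A.krylov v = ⊤ :=
  top_unique <| h ▸ Submodule.span_mono
    (Set.range_comp_subset_range Fin.val fun j => (A ^ j) *ᵥ v)

end Matrix

theorem stmt_15_general (n : ℕ)
    (A : ∀ k : ℕ, Matrix (Fin (n - k)) (Fin (n - k)) ℝ)
    (B : ∀ k : ℕ, Fin (n - k) → ℝ)
    (an : ∀ k : ℕ, Matrix (Fin (n - (k + 1))) (Fin (n - k)) ℝ)
    (hrank : ∀ k : ℕ, (an k).rank = n - (k + 1))
    (hann : ∀ k : ℕ, an k *ᵥ B k = 0)
    (hcomm : ∀ k j : ℕ,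
        an k *ᵥ ((A k ^ (j + 1)) *ᵥ B k) = (A (k + 1) ^ j) *ᵥ B (k + 1)) :
    ∀ k : ℕ, 1 ≤ k → k ≤ n - 1 → B k = 0 →
      Submodule.span ℝ (Set.range fun j : Fin n => (A 0 ^ (j : ℕ)) *ᵥ B 0) ≠ ⊤ := by
  intro k hk hkn hBk hspan
  have hdim : ∀ m, n - m ≤ finrank ℝ ((A m).krylov (B m)) := by
    intro m
    induction m with
    | zero => rw [krylov_eq_top_of_span_eq_top hspan, finrank_top, finrank_fin_fun]
    | succ m ih =>
      have hstep := finrank_krylov_le (hann m) (hcomm m)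
      rw [hrank m, Fintype.card_fin] at hstep
      omega
  have hdimk := hdim k
  rw [hBk, krylov_zero, finrank_bot] at hdimk
  omega

/-- Contrapositive controllability test: in the quotient chain, if `B_k = 0`
for some `1 ≤ k ≤ n-1`, then the vectors `B₀, A₀B₀, …, A₀^{n-1}B₀` do not span
`ℝⁿ`, i.e. `(A₀, B₀)` is not controllable. -/
theorem stmt_15 (n : ℕ)
    (A : ∀ k : ℕ, Matrix (Fin (n - k)) (Fin (n - k)) ℝ)
    (B : ∀ k : ℕ, Fin (n - k) → ℝ)
    (an : ∀ k : ℕ, Matrix (Fin (n - (k + 1))) (Fin (n - k)) ℝ)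
    (hrank : ∀ k : ℕ, (an k).rank = n - (k + 1))
    (hann : ∀ k : ℕ, an k *ᵥ B k = 0)
    (hBsucc : ∀ k : ℕ, B (k + 1) = an k *ᵥ (A k *ᵥ B k))
    (hcomm : ∀ k j : ℕ,
        an k *ᵥ ((A k ^ (j + 1)) *ᵥ B k) = (A (k + 1) ^ j) *ᵥ B (k + 1)) :
    ∀ k : ℕ, 1 ≤ k → k ≤ n - 1 → B k = 0 →
      Submodule.span ℝ (Set.range fun j : Fin n => (A 0 ^ (j : ℕ)) *ᵥ B 0) ≠ ⊤ :=
  stmt_15_general n A B an hrank hann hcomm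
end
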